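/- With φ_t and E_{s,t}(Q) the transition matrix generated by u ↦ A_u − φ_u(Q) S_u, for all 0 ≤ s ≤ t: φ_t(Q1) − φ_t(Q2) = E_{s,t}(Q2)[φ_s(Q1)−φ_s(Q2)]E_{s,t}(Q2)' − ∫_s^t E_{u,t}(Q2)[φ_u(Q1)−φ_u(Q2)] S_u [φ_u(Q1)−φ_u(Q2)] E_{u,t}(Q2)' du. -/

import Mathlib

open Matrix

attribute [local instance] Matrix.normedAddCommGroup Matrix.normedSpace

/-!
Put `Δ = φ₁ - φ₂` and `L = A - φ₂ S`. Since `φ₂` and `S` are symmetric, subtracting the two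
Riccati equations gives the linear (Lyapunov) equation `Δ' = L Δ + Δ Lᵀ - Δ S Δ`, in which the
quadratic term `Δ S Δ` is treated as a forcing term. `E` is the fundamental solution of `Y' = L Y`,
so it satisfies `E_{b,c} E_{a,b} = E_{a,c}`, and the variation of constants formula for the
Lyapunov equation with initial time `s` is exactly the claimed decomposition; it holds because
both sides solve the same linear matrix ODE with the same value at `s`.
-/

open Set MeasureTheory NNReal

section Deriv

variable {l m n 𝕜 : Type*} [Fintype m] [Fintype n] [NontriviallyNormedField 𝕜] {x : 𝕜}

theorem HasDerivAt.matrix_mul {f : 𝕜 → Matrix l m 𝕜} {g : 𝕜 → Matrix m n 𝕜}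
    {f' : Matrix l m 𝕜} {g' : Matrix m n 𝕜} (hf : HasDerivAt f f' x) (hg : HasDerivAt g g' x) :
    HasDerivAt (fun y => f y * g y) (f' * g x + f x * g') x := by
  refine hasDerivAt_pi.2 fun i => hasDerivAt_pi.2 fun j => ?_
  have hf' (k : m) : HasDerivAt (fun y => f y i k) (f' i k) x :=
    hasDerivAt_pi.1 (hasDerivAt_pi.1 hf i) k
  have hg' (k : m) : HasDerivAt (fun y => g y k j) (g' k j) x :=
    hasDerivAt_pi.1 (hasDerivAt_pi.1 hg k) j
  simpa [mul_apply, Finset.sum_add_distrib] using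
    HasDerivAt.fun_sum fun k (_ : k ∈ Finset.univ) => (hf' k).mul (hg' k)

theorem HasDerivAt.matrix_transpose {f : 𝕜 → Matrix m n 𝕜} {f' : Matrix m n 𝕜}
    (hf : HasDerivAt f f' x) : HasDerivAt (fun y => (f y)ᵀ) f'ᵀ x :=
  hasDerivAt_pi.2 fun i => hasDerivAt_pi.2 fun j => hasDerivAt_pi.1 (hasDerivAt_pi.1 hf j) i

end Deriv

namespace Matrix

variable {l m n : Type*} [Fintype l] [Fintype m] [Fintype n]

theorem norm_mul_le_card_mul {α : Type*} [NonUnitalNormedRing α]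
    (A : Matrix l m α) (B : Matrix m n α) : ‖A * B‖ ≤ Fintype.card m * ‖A‖ * ‖B‖ := by
  rw [norm_le_iff (by positivity)]
  intro i j
  calc ‖∑ k, A i k * B k j‖ ≤ ∑ k, ‖A i k * B k j‖ := norm_sum_le _ _
    _ ≤ ∑ _k : m, ‖A‖ * ‖B‖ := Finset.sum_le_sum fun k _ =>
        (norm_mul_le _ _).trans <| mul_le_mul (norm_entry_le_entrywise_sup_norm A)
          (norm_entry_le_entrywise_sup_norm B) (norm_nonneg _) (norm_nonneg _)
    _ = Fintype.card m * ‖A‖ * ‖B‖ := by simp [mul_assoc]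

theorem intervalIntegral_mul_mul {f : ℝ → Matrix m n ℝ} (hf : Continuous f) (a b : ℝ)
    (P : Matrix l m ℝ) (Q : Matrix n n ℝ) :
    ∫ u in a..b, P * f u * Q = P * (∫ u in a..b, f u) * Q :=
  let T : Matrix m n ℝ →ₗ[ℝ] Matrix l n ℝ :=
    { toFun := fun Y => P * Y * Q
      map_add' := fun Y Z => by simp only [Matrix.mul_add, Matrix.add_mul]
      map_smul' := fun c Y => by simp only [RingHom.id_apply, Matrix.smul_mul, Matrix.mul_smul] }
  (LinearMap.toContinuousLinearMap T).intervalIntegral_comp_comm (hf.intervalIntegrable a b)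

theorem riccati_drift_sub {R : Type*} [CommRing R] (A S P Q R₁ : Matrix n n R) (hS : S.IsSymm)
    (hQ : Q.IsSymm) :
    A * P + P * Aᵀ - P * S * P + R₁ - (A * Q + Q * Aᵀ - Q * S * Q + R₁) =
      (A - Q * S) * (P - Q) + (P - Q) * (A - Q * S)ᵀ - (P - Q) * S * (P - Q) := by
  rw [transpose_sub, transpose_mul, hS.eq, hQ.eq]
  noncomm_ring

theorem exists_lipschitzWith_mul_add_mul_add {L N c : ℝ → Matrix n n ℝ} (hL : Continuous L)
    (hN : Continuous N) (a b : ℝ) :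
    ∃ K : ℝ≥0, ∀ u ∈ Icc a b, LipschitzWith K fun Y => L u * Y + Y * N u + c u := by
  obtain ⟨C₁, hC₁⟩ := isCompact_Icc.exists_bound_of_continuousOn hL.continuousOn
  obtain ⟨C₂, hC₂⟩ := isCompact_Icc.exists_bound_of_continuousOn hN.continuousOn
  refine ⟨Real.toNNReal (Fintype.card n * (C₁ + C₂)), fun u hu =>
    LipschitzWith.of_dist_le_mul fun Y Z => ?_⟩
  rw [dist_eq_norm, dist_eq_norm]
  calc ‖L u * Y + Y * N u + c u - (L u * Z + Z * N u + c u)‖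
      = ‖L u * (Y - Z) + (Y - Z) * N u‖ := by rw [Matrix.mul_sub, Matrix.sub_mul]; abel_nf
    _ ≤ ‖L u * (Y - Z)‖ + ‖(Y - Z) * N u‖ := norm_add_le _ _
    _ ≤ Fintype.card n * C₁ * ‖Y - Z‖ + Fintype.card n * ‖Y - Z‖ * C₂ :=
        add_le_add ((norm_mul_le_card_mul _ _).trans (by gcongr; exact hC₁ u hu))
          ((norm_mul_le_card_mul _ _).trans (by gcongr; exact hC₂ u hu))
    _ = Fintype.card n * (C₁ + C₂) * ‖Y - Z‖ := by ring
    _ ≤ _ := by gcongr; exact Real.le_coe_toNNReal _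

theorem eq_of_hasDerivAt_mul_add_mul_add {L N c f g : ℝ → Matrix n n ℝ} (hL : Continuous L)
    (hN : Continuous N) (hf : ∀ u, HasDerivAt f (L u * f u + f u * N u + c u) u)
    (hg : ∀ u, HasDerivAt g (L u * g u + g u * N u + c u) u) {t₀ : ℝ} (h : f t₀ = g t₀) :
    f = g := by
  funext t
  obtain ⟨a, b, ht, ht₀⟩ : ∃ a b, t ∈ Ioo a b ∧ t₀ ∈ Ioo a b :=
    ⟨min t t₀ - 1, max t t₀ + 1, by grind⟩
  obtain ⟨K, hK⟩ := exists_lipschitzWith_mul_add_mul_add (c := c) hL hN a b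
  exact ODE_solution_unique_of_mem_Ioo (s := fun _ => univ)
    (fun u hu => (hK u (Ioo_subset_Icc_self hu)).lipschitzOnWith) ht₀
    (fun u _ => ⟨hf u, trivial⟩) (fun u _ => ⟨hg u, trivial⟩) h ht

section Transition

variable [DecidableEq n] {L : ℝ → Matrix n n ℝ}
  {E : ℝ → ℝ → Matrix n n ℝ} (hL : Continuous L) (hE₀ : ∀ s, E s s = 1)
  (hE : ∀ s t, HasDerivAt (fun u => E s u) (L t * E s t) t)
include hL hE₀ hE

theorem transition_mul_transition (a b c : ℝ) : E b c * E a b = E a c := by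
  have h := eq_of_hasDerivAt_mul_add_mul_add (N := 0) (c := 0) hL continuous_const
    (f := fun u => E b u * E a b) (g := fun u => E a u)
    (fun u => by simpa [mul_assoc] using (hE b u).matrix_mul (hasDerivAt_const u (E a b)))
    (fun u => by simpa using hE a u) (t₀ := b) (by simp [hE₀])
  exact congrFun h c

theorem transition_mul_transition_swap (a b : ℝ) : E a b * E b a = 1 := by
  rw [transition_mul_transition hL hE₀ hE, hE₀]

theorem continuous_transition_left (c : ℝ) : Continuous fun u => E u c := by
  have hinv : (fun u => E u c) = fun u => (E c u)⁻¹ :=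
    funext fun u => (inv_eq_right_inv (transition_mul_transition_swap hL hE₀ hE c u)).symm
  rw [hinv, continuous_iff_continuousAt]
  intro u
  have hdet : (E c u).det ≠ 0 :=
    (isUnit_det_of_right_inverse (transition_mul_transition_swap hL hE₀ hE c u)).ne_zero
  refine (continuousAt_matrix_inv _ ?_).comp (hE c u).continuousAt
  simpa only [Ring.inverse_eq_inv'] using continuousAt_inv₀ hdet

theorem lyapunov_variation_of_constants {X Y : ℝ → Matrix n n ℝ} (hX : Continuous X)
    (hY : ∀ u, HasDerivAt Y (L u * Y u + Y u * (L u)ᵀ - X u) u) (s t : ℝ) :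
    Y t = E s t * Y s * (E s t)ᵀ - ∫ u in s..t, E u t * X u * (E u t)ᵀ := by
  set F : ℝ → Matrix n n ℝ := fun u => E u s * X u * (E u s)ᵀ
  have hF : Continuous F := by
    have hEs := continuous_transition_left hL hE₀ hE s
    exact (hEs.matrix_mul hX).matrix_mul hEs.matrix_transpose
  set G : ℝ → Matrix n n ℝ := fun x => E s x * (Y s - ∫ u in s..x, F u) * (E s x)ᵀ
  have hG : ∀ x, HasDerivAt G (L x * G x + G x * (L x)ᵀ + -X x) x := by
    intro x
    have hW : HasDerivAt (fun x => Y s - ∫ u in s..x, F u) (-F x) x := by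
      exact (hF.integral_hasStrictDerivAt s x).hasDerivAt.const_sub (Y s)
    have hF_conj : E s x * F x * (E s x)ᵀ = X x := by
      have h := transition_mul_transition_swap hL hE₀ hE s x
      calc E s x * F x * (E s x)ᵀ = E s x * E x s * X x * (E s x * E x s)ᵀ := by
            simp only [F, transpose_mul, Matrix.mul_assoc]
        _ = X x := by rw [h, transpose_one, Matrix.one_mul, Matrix.mul_one]
    convert ((hE s x).matrix_mul hW).matrix_mul (hE s x).matrix_transpose using 1
    rw [← hF_conj]
    simp only [G, transpose_mul]
    noncomm_ring
  have hYG : Y = G := eq_of_hasDerivAt_mul_add_mul_add hL hL.matrix_transpose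
    (fun u => by simpa only [sub_eq_add_neg] using hY u) hG (t₀ := s)
    (by simp [G, hE₀])
  calc Y t = G t := congrFun hYG t
    _ = _ := by
      simp only [G, Matrix.mul_sub, Matrix.sub_mul, ← intervalIntegral_mul_mul hF]
      congr 2 with u : 1
      rw [← transition_mul_transition hL hE₀ hE u s t]
      simp only [F, transpose_mul, Matrix.mul_assoc]

end Transition

end Matrix

theorem riccati_flow_semigroup_decomposition_general (r : ℕ)
    (A S : ℝ → Matrix (Fin r) (Fin r) ℝ)
    (hAcont : Continuous A) (hScont : Continuous S)
    (hS : ∀ t : ℝ, (S t).PosSemidef)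
    (R1 : Matrix (Fin r) (Fin r) ℝ)
    (φ1 φ2 : ℝ → Matrix (Fin r) (Fin r) ℝ)
    (hφ2sym : ∀ t : ℝ, (φ2 t).IsSymm)
    (hφ1 : ∀ t : ℝ, HasDerivAt φ1
      (A t * φ1 t + φ1 t * (A t)ᵀ - φ1 t * S t * φ1 t + R1) t)
    (hφ2 : ∀ t : ℝ, HasDerivAt φ2
      (A t * φ2 t + φ2 t * (A t)ᵀ - φ2 t * S t * φ2 t + R1) t)
    (E : ℝ → ℝ → Matrix (Fin r) (Fin r) ℝ)
    (hE0 : ∀ s : ℝ, E s s = 1)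
    (hE : ∀ s t : ℝ, HasDerivAt (fun u => E s u)
      ((A t - φ2 t * S t) * E s t) t) :
    ∀ s t : ℝ, 0 ≤ s → s ≤ t →
      φ1 t - φ2 t =
        E s t * (φ1 s - φ2 s) * (E s t)ᵀ -
        ∫ u in s..t, E u t * (φ1 u - φ2 u) * S u * (φ1 u - φ2 u) * (E u t)ᵀ := by
  intro s t _ _
  have hφ1c : Continuous φ1 := continuous_iff_continuousAt.2 fun u => (hφ1 u).continuousAt
  have hφ2c : Continuous φ2 := continuous_iff_continuousAt.2 fun u => (hφ2 u).continuousAt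
  have hSsymm (u : ℝ) : (S u).IsSymm := isHermitian_iff_isSymm.1 (hS u).1
  have hΔ (u : ℝ) : HasDerivAt (fun v => φ1 v - φ2 v)
      ((A u - φ2 u * S u) * (φ1 u - φ2 u) + (φ1 u - φ2 u) * (A u - φ2 u * S u)ᵀ -
        (φ1 u - φ2 u) * S u * (φ1 u - φ2 u)) u :=
    ((hφ1 u).sub (hφ2 u)).congr_deriv
      (riccati_drift_sub _ _ _ _ _ (hSsymm u) (hφ2sym u))
  simpa only [Pi.sub_apply, Matrix.mul_assoc] using
    lyapunov_variation_of_constants (hAcont.sub (hφ2c.matrix_mul hScont)) hE0 hE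
      (((hφ1c.sub hφ2c).matrix_mul hScont).matrix_mul (hφ1c.sub hφ2c)) hΔ s t

/-- Semigroup decomposition of Riccati flow differences with respect to the
transition matrices `E_{s,t}(Q2)` generated by `u ↦ A_u − φ_u(Q2) S_u`:
`φ_t(Q1) − φ_t(Q2) = E_{s,t}(Q2)[φ_s(Q1)−φ_s(Q2)]E_{s,t}(Q2)ᵀ
  − ∫_s^t E_{u,t}(Q2)[φ_u(Q1)−φ_u(Q2)] S_u [φ_u(Q1)−φ_u(Q2)] E_{u,t}(Q2)ᵀ du`. -/
theorem riccati_flow_semigroup_decomposition (r : ℕ)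
    (A S : ℝ → Matrix (Fin r) (Fin r) ℝ)
    (hAcont : Continuous A) (hScont : Continuous S)
    (hS : ∀ t : ℝ, (S t).PosSemidef)
    (R1 : Matrix (Fin r) (Fin r) ℝ) (hR1 : R1.PosDef)
    (Q1 Q2 : Matrix (Fin r) (Fin r) ℝ) (hQ1 : Q1.PosDef) (hQ2 : Q2.PosDef)
    (φ1 φ2 : ℝ → Matrix (Fin r) (Fin r) ℝ)
    (hφ1sym : ∀ t : ℝ, (φ1 t).IsSymm) (hφ2sym : ∀ t : ℝ, (φ2 t).IsSymm)
    (hφ10 : φ1 0 = Q1) (hφ20 : φ2 0 = Q2)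
    (hφ1 : ∀ t : ℝ, HasDerivAt φ1
      (A t * φ1 t + φ1 t * (A t)ᵀ - φ1 t * S t * φ1 t + R1) t)
    (hφ2 : ∀ t : ℝ, HasDerivAt φ2
      (A t * φ2 t + φ2 t * (A t)ᵀ - φ2 t * S t * φ2 t + R1) t)
    (E : ℝ → ℝ → Matrix (Fin r) (Fin r) ℝ)
    (hE0 : ∀ s : ℝ, E s s = 1)
    (hE : ∀ s t : ℝ, HasDerivAt (fun u => E s u)
      ((A t - φ2 t * S t) * E s t) t) :
    ∀ s t : ℝ, 0 ≤ s → s ≤ t →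
      φ1 t - φ2 t =
        E s t * (φ1 s - φ2 s) * (E s t)ᵀ -
        ∫ u in s..t, E u t * (φ1 u - φ2 u) * S u * (φ1 u - φ2 u) * (E u t)ᵀ :=
  riccati_flow_semigroup_decomposition_general r A S hAcont hScont hS R1 φ1 φ2 hφ2sym hφ1 hφ2 E hE0
    hE
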